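/- The part of the pentablock's distinguished boundary lying on the variety {s² = 4p} equals the orbit of (0,2,1) under Aut(𝔓): {(a,s,p) : |a|²+|s|²/4 = 1, (s,p) ∈ bΓ₂, s² = 4p} = { f_{ωv}(0,2,1) : ω ∈ 𝕋, v ∈ Aut(𝔻) } = {(0, 2z, z²) : z ∈ 𝕋}. -/

import Mathlib

/-!
On `bΓ₂` the equation `s² = 4p` reads `(z₁ - z₂)² = 0`, so `z₁ = z₂`, `|s| = 2` and hence `a = 0`.
The orbit of `(0, 2, 1)` is the same circle because a disc automorphism maps `𝕋` onto `𝕋`.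
-/

open Complex

/-- Möbius automorphism of the unit disc. -/
noncomputable def discAut (η α z : ℂ) : ℂ := η * (z - α) / (starRingEnd ℂ α * z - 1)

def symmetrizedBidiscBoundary : Set (ℂ × ℂ) :=
  {x | ∃ z₁ z₂ : ℂ, ‖z₁‖ = 1 ∧ ‖z₂‖ = 1 ∧ x.1 = z₁ + z₂ ∧ x.2 = z₁ * z₂}

def pentablockBoundary : Set (ℂ × ℂ × ℂ) :=
  {x | ‖x.1‖ ^ 2 + ‖x.2.1‖ ^ 2 / 4 = 1 ∧ x.2 ∈ symmetrizedBidiscBoundary}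

def royalVariety : Set (ℂ × ℂ × ℂ) := {x | x.2.1 ^ 2 = 4 * x.2.2}

theorem add_sq_eq_four_mul_iff {R : Type*} [CommRing R] [NoZeroDivisors R] (a b : R) :
    (a + b) ^ 2 = 4 * (a * b) ↔ a = b := by
  rw [← sub_eq_zero, ← sub_eq_zero (a := a)]
  conv_rhs => rw [← pow_eq_zero_iff two_ne_zero]
  constructor <;> intro h <;> linear_combination h

theorem pentablockBoundary_inter_royalVariety :
    pentablockBoundary ∩ royalVariety = {x | ∃ z : ℂ, ‖z‖ = 1 ∧ x = (0, 2 * z, z ^ 2)} := by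
  ext ⟨a, s, p⟩
  constructor
  · rintro ⟨⟨hnorm, z, w, hz, hw, rfl, rfl⟩, hroyal⟩
    obtain rfl : z = w := (add_sq_eq_four_mul_iff z w).1 hroyal
    have hs : ‖z + z‖ = 2 := by rw [← two_mul, norm_mul, hz]; norm_num
    have ha : ‖a‖ = 0 := by
      rw [hs] at hnorm
      nlinarith [norm_nonneg a]
    refine ⟨z, hz, ?_⟩
    rw [norm_eq_zero.1 ha, two_mul, sq]
  · rintro ⟨z, hz, h⟩
    obtain ⟨rfl, rfl, rfl⟩ : a = 0 ∧ s = 2 * z ∧ p = z ^ 2 := by simpa using h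
    refine ⟨⟨?_, z, z, hz, hz, two_mul z, sq z⟩, show (2 * z) ^ 2 = 4 * z ^ 2 by ring⟩
    rw [norm_zero, norm_mul, hz]
    norm_num

theorem norm_conj_mul_sub_one {z : ℂ} (hz : ‖z‖ = 1) (α : ℂ) :
    ‖starRingEnd ℂ α * z - 1‖ = ‖z - α‖ := by
  have hzz : z * starRingEnd ℂ z = 1 := by
    rw [mul_conj, normSq_eq_norm_sq, hz]; norm_num
  calc ‖starRingEnd ℂ α * z - 1‖ = ‖z * starRingEnd ℂ (α - z)‖ := by
        rw [map_sub]; congr 1; linear_combination hzz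
    _ = ‖z - α‖ := by rw [norm_mul, hz, one_mul, norm_conj, norm_sub_rev]

theorem norm_discAut {z α : ℂ} (hz : ‖z‖ = 1) (hα : ‖α‖ < 1) (η : ℂ) :
    ‖discAut η α z‖ = ‖η‖ := by
  have hzα : z - α ≠ 0 := by
    rw [sub_ne_zero]; rintro rfl; exact hα.ne hz
  rw [discAut, norm_div, norm_mul, norm_conj_mul_sub_one hz,
    mul_div_assoc, div_self (norm_ne_zero_iff.2 hzα), mul_one]

theorem discAut_zero (η z : ℂ) : discAut η 0 z = -(η * z) := by
  simp [discAut, div_neg]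

theorem exists_discAut_one_eq_iff (w : ℂ) :
    (∃ η α : ℂ, ‖η‖ = 1 ∧ ‖α‖ < 1 ∧ discAut η α 1 = w) ↔ ‖w‖ = 1 := by
  constructor
  · rintro ⟨η, α, hη, hα, rfl⟩
    rw [norm_discAut norm_one hα, hη]
  · intro hw
    exact ⟨-w, 0, by rw [norm_neg, hw], by simp, by simp [discAut_zero]⟩

/-- The part of the pentablock's distinguished boundary on the variety `s² = 4p` equals
the orbit of `(0,2,1)` under `Aut(𝔓)` (noting `f_{ωv}(0,2,1) = (0, 2v(1), v(1)²)`),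
which is `{(0, 2z, z²) : z ∈ 𝕋}`. -/
theorem pentablock_boundary_royal_eq_orbit :
    {x : ℂ × ℂ × ℂ |
        (‖x.1‖ ^ 2 + ‖x.2.1‖ ^ 2 / 4 = 1 ∧
          (∃ z₁ z₂ : ℂ, ‖z₁‖ = 1 ∧ ‖z₂‖ = 1 ∧
            x.2.1 = z₁ + z₂ ∧ x.2.2 = z₁ * z₂)) ∧ x.2.1 ^ 2 = 4 * x.2.2} =
      {x : ℂ × ℂ × ℂ | ∃ ω η α : ℂ, ‖ω‖ = 1 ∧ ‖η‖ = 1 ∧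
          ‖α‖ < 1 ∧
          x = (0, 2 * discAut η α 1, (discAut η α 1) ^ 2)} ∧
    {x : ℂ × ℂ × ℂ |
        (‖x.1‖ ^ 2 + ‖x.2.1‖ ^ 2 / 4 = 1 ∧
          (∃ z₁ z₂ : ℂ, ‖z₁‖ = 1 ∧ ‖z₂‖ = 1 ∧
            x.2.1 = z₁ + z₂ ∧ x.2.2 = z₁ * z₂)) ∧ x.2.1 ^ 2 = 4 * x.2.2} =
      {x : ℂ × ℂ × ℂ | ∃ z : ℂ, ‖z‖ = 1 ∧ x = (0, 2 * z, z ^ 2)} := by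
  refine ⟨pentablockBoundary_inter_royalVariety.trans ?_, pentablockBoundary_inter_royalVariety⟩
  ext x
  constructor
  · rintro ⟨z, hz, rfl⟩
    obtain ⟨η, α, hη, hα, rfl⟩ := (exists_discAut_one_eq_iff z).2 hz
    exact ⟨1, η, α, norm_one, hη, hα, rfl⟩
  · rintro ⟨-, η, α, -, hη, hα, rfl⟩
    exact ⟨_, (exists_discAut_one_eq_iff _).1 ⟨η, α, hη, hα, rfl⟩, rfl⟩
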